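/- For (a,b,c) ∈ ℝ³ let X_{a,b,c} : ℝ⁴ → ℝ⁴ be the linear map X(λ₁,λ₂,λ₃,λ₄) = (3aλ₁+bλ₂, 3cλ₁+aλ₂+2bλ₃, 2cλ₂−aλ₃+3bλ₄, cλ₃−3aλ₄), and let Π_{a,b,c} = {λ ∈ ℝ⁴ : λ₂ = λ₄ and 3cλ₁ + 4aλ₂ + (2b−c)λ₃ = 0}. Let Σ₃ ⊂ GL(2,ℝ) be the subgroup generated by the matrices [[−1/2, √3/2],[√3/2, 1/2]] and [[1,0],[0,−1]], and write A_{a,b,c} = [[a,b],[c,−a]]. Then for (a,b,c) ≠ (0,0,0) the following are equivalent: (1) X_{a,b,c}(Π_{a,b,c}) ⊆ Π_{a,b,c}; (2) there exist k ∈ Σ₃ and r ∈ ℝ with r ≠ 0 such that k·A_{a,b,c}·k⁻¹ equals r·A_{1,0,0}, r·A_{0,1,3} or r·A_{0,1,−1}. Moreover Π_{1,0,0} = {λ₂ = λ₄ = 0}, Π_{0,1,3} = {9λ₁ = λ₃, λ₂ = λ₄} and Π_{0,1,−1} = {λ₁ = λ₃, λ₂ = λ₄}. -/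

import Mathlib

noncomputable section

/-- The fundamental vector field `X_{a,b,c}` on the space `B³ ≅ ℝ⁴` of binary cubics. -/
def Xabc (a b c : ℝ) (l : Fin 4 → ℝ) : Fin 4 → ℝ :=
  ![3 * a * l 0 + b * l 1,
    3 * c * l 0 + a * l 1 + 2 * b * l 2,
    2 * c * l 1 - a * l 2 + 3 * b * l 3,
    c * l 2 - 3 * a * l 3]

/-- The plane `Π_{a,b,c}` of half-flat cubics fixed linearly by `X_{a,b,c}`. -/
def Pabc (a b c : ℝ) : Set (Fin 4 → ℝ) :=
  {l | l 1 = l 3 ∧ 3 * c * l 0 + 4 * a * l 1 + (2 * b - c) * l 2 = 0}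

/-- The matrix `A_{a,b,c} ∈ sl(2,ℝ)`. -/
def Amat (a b c : ℝ) : Matrix (Fin 2) (Fin 2) ℝ := !![a, b; c, -a]

/-- The first generator of `Σ₃ ⊂ GL(2,ℝ)`, the image of the transposition `(12)`. -/
def gen1 : GL (Fin 2) ℝ :=
  Matrix.GeneralLinearGroup.mkOfDetNeZero !![-1/2, Real.sqrt 3 / 2; Real.sqrt 3 / 2, 1/2]
    (by
      have h3 : Real.sqrt 3 * Real.sqrt 3 = 3 := Real.mul_self_sqrt (by norm_num)
      simp only [Matrix.det_fin_two_of]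
      nlinarith [h3])

/-- The second generator of `Σ₃ ⊂ GL(2,ℝ)`, the image of the transposition `(23)`. -/
def gen2 : GL (Fin 2) ℝ :=
  Matrix.GeneralLinearGroup.mkOfDetNeZero !![1, 0; 0, -1]
    (by norm_num [Matrix.det_fin_two_of])

/-- The copy of the symmetric group `Σ₃` inside `GL(2,ℝ)` generated by `gen1` and `gen2`. -/
def Sigma3 : Subgroup (GL (Fin 2) ℝ) := Subgroup.closure {gen1, gen2}


/-!
On the hyperplane `λ₂ = λ₄`, `Π_{a,b,c}` is the kernel of a linear form `f`, and `X_{a,b,c}` maps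
`Π_{a,b,c}` into itself iff `f ∘ X_{a,b,c}` vanishes on `ker f`, i.e. iff `f × (f ∘ X_{a,b,c}) = 0`:
three cubic equations in `(a, b, c)`. Their solution set in `sl(2,ℝ)` is invariant under
conjugation by `Σ₃` (it suffices to check the two involutive generators) and contains the three
normal forms; conversely, a case analysis shows that it is the union of seven lines, the
`Σ₃`-conjugates of the lines through `A_{1,0,0}`, `A_{0,1,3}` and `A_{0,1,-1}`.
-/

open Matrix ConjAct MulAction Set Pointwise

theorem crossProduct_eq_zero_iff_forall_dotProduct {F : Type*} [Field F] {u v : Fin 3 → F}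
    (hu : u ≠ 0) : u ⨯₃ v = 0 ↔ ∀ w, u ⬝ᵥ w = 0 → v ⬝ᵥ w = 0 := by
  constructor
  · intro huv w huw
    have h := cross_cross_eq_smul_sub_smul u v w
    rw [huv, huw, zero_smul, zero_sub, map_zero, LinearMap.zero_apply, eq_comm, neg_eq_zero,
      smul_eq_zero] at h
    exact h.resolve_right hu
  · intro h
    rw [← neg_eq_zero, cross_anticomm]
    refine dotProduct_eq_zero _ fun w => ?_
    rw [dotProduct_comm, triple_product_permutation]
    exact h _ (dot_self_cross u w)

theorem mem_stabilizer_set_of_mul_self_eq_one {G α : Type*} [Group G] [MulAction G α]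
    {s : Set α} {g : G} (hg : g * g = 1) (hs : ∀ x ∈ s, g • x ∈ s) : g ∈ stabilizer G s :=
  mem_stabilizer_set.2 fun x => ⟨fun h => by simpa [smul_smul, hg] using hs _ h, hs x⟩

/- In the coordinates `(λ₁, λ₂, λ₃)` of the hyperplane `λ₂ = λ₄`, the plane `Π_{a,b,c}` is the
kernel of `planeForm a b c`, and `pulledForm a b c` is `planeForm a b c ∘ X_{a,b,c}`. -/
def planeForm (a b c : ℝ) : Fin 3 → ℝ := ![3 * c, 4 * a, 2 * b - c]

def pulledForm (a b c : ℝ) : Fin 3 → ℝ :=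
  ![21 * a * c, 4 * a ^ 2 + 6 * b ^ 2 + 4 * b * c - 2 * c ^ 2, a * (6 * b + c)]

/-- Vanishing of the `2 × 2` minors of `planeForm a b c` and `pulledForm a b c`, with constant
factors dropped. -/
def IsPiStable (a b c : ℝ) : Prop :=
  c * (12 * a ^ 2 - 3 * b ^ 2 - 2 * b * c + c ^ 2) = 0 ∧ a * c * (b - c) = 0 ∧
    4 * a ^ 2 * (2 * b + c) - (3 * b - c) * (b + c) * (2 * b - c) = 0

section Plane

variable {a b c : ℝ}

theorem planeForm_ne_zero (h : ¬(a = 0 ∧ b = 0 ∧ c = 0)) : planeForm a b c ≠ 0 := by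
  intro h0
  have e0 : 3 * c = 0 := congrFun h0 0
  have e1 : 4 * a = 0 := congrFun h0 1
  have e2 : 2 * b - c = 0 := congrFun h0 2
  exact h ⟨by linarith, by linarith, by linarith⟩

theorem mem_Pabc_iff {l : Fin 4 → ℝ} :
    l ∈ Pabc a b c ↔ l 1 = l 3 ∧ planeForm a b c ⬝ᵥ ![l 0, l 1, l 2] = 0 := by
  simp only [Pabc, Set.mem_ofPred_eq, planeForm, vec3_dotProduct']

theorem Xabc_mem_Pabc_iff {l : Fin 4 → ℝ} (hl : l ∈ Pabc a b c) :
    Xabc a b c l ∈ Pabc a b c ↔ pulledForm a b c ⬝ᵥ ![l 0, l 1, l 2] = 0 := by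
  obtain ⟨h13, hl⟩ := hl
  simp only [Pabc, Set.mem_ofPred_eq, Xabc, pulledForm, vec3_dotProduct', Matrix.cons_val]
  constructor
  · rintro ⟨-, h⟩
    linear_combination h + 3 * b * (2 * b - c) * h13
  · intro h
    exact ⟨by linear_combination hl - 3 * a * h13,
      by linear_combination h - 3 * b * (2 * b - c) * h13⟩

theorem mapsTo_Xabc_iff (h : ¬(a = 0 ∧ b = 0 ∧ c = 0)) :
    MapsTo (Xabc a b c) (Pabc a b c) (Pabc a b c) ↔ planeForm a b c ⨯₃ pulledForm a b c = 0 := by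
  rw [crossProduct_eq_zero_iff_forall_dotProduct (planeForm_ne_zero h)]
  constructor
  · intro hX w hw
    have hw3 : ![w 0, w 1, w 2] = w := by ext i; fin_cases i <;> rfl
    have hl : ![w 0, w 1, w 2, w 1] ∈ Pabc a b c := mem_Pabc_iff.2 ⟨rfl, by simpa [hw3] using hw⟩
    simpa [hw3] using (Xabc_mem_Pabc_iff hl).1 (hX hl)
  · intro hX l hl
    exact (Xabc_mem_Pabc_iff hl).2 (hX _ (mem_Pabc_iff.1 hl).2)

theorem cross_eq_zero_iff_isPiStable :
    planeForm a b c ⨯₃ pulledForm a b c = 0 ↔ IsPiStable a b c := by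
  have hcross : planeForm a b c ⨯₃ pulledForm a b c =
      ![2 * (4 * a ^ 2 * (2 * b + c) - (3 * b - c) * (b + c) * (2 * b - c)),
        24 * (a * c * (b - c)), -6 * (c * (12 * a ^ 2 - 3 * b ^ 2 - 2 * b * c + c ^ 2))] := by
    ext i
    fin_cases i <;>
      simp only [cross_apply, planeForm, pulledForm, Fin.isValue, Fin.reduceFinMk, cons_val] <;>
      ring
  simp only [hcross, IsPiStable, cons_eq_zero_iff, zero_empty, mul_eq_zero, neg_mul, neg_eq_zero,
    OfNat.ofNat_ne_zero, false_or, and_true]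
  tauto

end Plane

def piStableSet : Set (Matrix (Fin 2) (Fin 2) ℝ) :=
  {M | M.trace = 0 ∧ IsPiStable (M 0 0) (M 0 1) (M 1 0)}

theorem Amat_mem_piStableSet {a b c : ℝ} : Amat a b c ∈ piStableSet ↔ IsPiStable a b c := by
  simp [piStableSet, Amat, trace_fin_two]

theorem eq_Amat_of_trace_eq_zero {M : Matrix (Fin 2) (Fin 2) ℝ} (hM : M.trace = 0) :
    M = Amat (M 0 0) (M 0 1) (M 1 0) := by
  rw [trace_fin_two] at hM
  ext i j
  fin_cases i <;> fin_cases j <;>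
    simp only [Amat, Fin.isValue, Fin.zero_eta, Fin.mk_one, of_apply, cons_val', cons_val_zero,
      cons_val_one, cons_val_fin_one]
  linarith

theorem smul_Amat (r a b c : ℝ) : r • Amat a b c = Amat (r * a) (r * b) (r * c) := by
  ext i j
  fin_cases i <;> fin_cases j <;> simp [Amat]

theorem gen1_mem_Sigma3 : gen1 ∈ Sigma3 := Subgroup.subset_closure (by simp)

theorem gen2_mem_Sigma3 : gen2 ∈ Sigma3 := Subgroup.subset_closure (by simp)

theorem gen1_mul_self : gen1 * gen1 = 1 := by
  have hsqrt := Real.mul_self_sqrt (show (0 : ℝ) ≤ 3 by norm_num)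
  ext i j
  fin_cases i <;> fin_cases j <;>
    simp only [gen1, Units.val_mul, GeneralLinearGroup.val_mkOfDetNeZero, mul_fin_two,
      Units.val_one, one_fin_two, of_apply, Fin.isValue, Fin.zero_eta, Fin.mk_one, cons_val',
      cons_val_zero, cons_val_one, cons_val_fin_one] <;>
    linarith

theorem gen2_mul_self : gen2 * gen2 = 1 := by
  ext i j
  fin_cases i <;> fin_cases j <;> simp [gen2]

theorem toConjAct_gen1_smul_Amat (a b c : ℝ) :
    toConjAct gen1 • Amat a b c = Amat (-a / 2 - √3 * (b + c) / 4)
      (-a * √3 / 2 - b / 4 + 3 * c / 4) (-a * √3 / 2 + 3 * b / 4 - c / 4) := by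
  have hsqrt := Real.mul_self_sqrt (show (0 : ℝ) ≤ 3 by norm_num)
  rw [units_smul_def, ofConjAct_toConjAct, inv_eq_of_mul_eq_one_right gen1_mul_self]
  ext i j
  fin_cases i <;> fin_cases j <;>
    simp only [gen1, Amat, GeneralLinearGroup.val_mkOfDetNeZero, mul_fin_two, of_apply,
      Fin.isValue, Fin.zero_eta, Fin.mk_one, cons_val', cons_val_zero, cons_val_one,
      cons_val_fin_one] <;>
    grind

theorem toConjAct_gen2_smul_Amat (a b c : ℝ) :
    toConjAct gen2 • Amat a b c = Amat a (-b) (-c) := by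
  rw [units_smul_def, ofConjAct_toConjAct, inv_eq_of_mul_eq_one_right gen2_mul_self]
  ext i j
  fin_cases i <;> fin_cases j <;> simp [gen2, Amat]

theorem IsPiStable.gen1_conj {a b c : ℝ} (h : IsPiStable a b c) :
    IsPiStable (-a / 2 - √3 * (b + c) / 4) (-a * √3 / 2 - b / 4 + 3 * c / 4)
      (-a * √3 / 2 + 3 * b / 4 - c / 4) := by
  have hsqrt := Real.mul_self_sqrt (show (0 : ℝ) ≤ 3 by norm_num)
  obtain ⟨h1, h2, h3⟩ := h
  exact ⟨by grind, by grind, by grind⟩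

theorem IsPiStable.gen2_conj {a b c : ℝ} (h : IsPiStable a b c) : IsPiStable a (-b) (-c) := by
  obtain ⟨h1, h2, h3⟩ := h
  exact ⟨by linear_combination -h1, by linear_combination h2, by linear_combination -h3⟩

theorem toConjAct_mem_stabilizer_of_mul_self_eq_one {k : GL (Fin 2) ℝ} (hk : k * k = 1)
    (h : ∀ a b c, IsPiStable a b c → toConjAct k • Amat a b c ∈ piStableSet) :
    toConjAct k ∈ stabilizer (ConjAct (GL (Fin 2) ℝ)) piStableSet := by
  refine mem_stabilizer_set_of_mul_self_eq_one (by rw [← map_mul, hk, map_one]) ?_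
  rintro M ⟨hM, hs⟩
  rw [eq_Amat_of_trace_eq_zero hM]
  exact h _ _ _ hs

theorem toConjAct_mem_stabilizer {k : GL (Fin 2) ℝ} (hk : k ∈ Sigma3) :
    toConjAct k ∈ stabilizer (ConjAct (GL (Fin 2) ℝ)) piStableSet := by
  induction hk using Subgroup.closure_induction with
  | mem k hk =>
    rcases hk with rfl | rfl
    · refine toConjAct_mem_stabilizer_of_mul_self_eq_one gen1_mul_self fun a b c h => ?_
      rw [toConjAct_gen1_smul_Amat, Amat_mem_piStableSet]
      exact h.gen1_conj
    · refine toConjAct_mem_stabilizer_of_mul_self_eq_one gen2_mul_self fun a b c h => ?_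
      rw [toConjAct_gen2_smul_Amat, Amat_mem_piStableSet]
      exact h.gen2_conj
  | one => rw [map_one]; exact one_mem _
  | mul _ _ _ _ h₁ h₂ => rw [map_mul]; exact mul_mem h₁ h₂
  | inv _ _ h => rw [map_inv]; exact inv_mem h

def HasNormalForm (a b c : ℝ) : Prop :=
  ∃ k ∈ Sigma3, ∃ r : ℝ, r ≠ 0 ∧
    (toConjAct k • Amat a b c = r • Amat 1 0 0 ∨ toConjAct k • Amat a b c = r • Amat 0 1 3 ∨
      toConjAct k • Amat a b c = r • Amat 0 1 (-1))

section NormalForm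

variable {a b c : ℝ}

theorem IsPiStable.of_hasNormalForm (h : HasNormalForm a b c) : IsPiStable a b c := by
  obtain ⟨k, hk, r, -, hN⟩ := h
  rw [← Amat_mem_piStableSet, ← mem_stabilizer_set.1 (toConjAct_mem_stabilizer hk)]
  rcases hN with hN | hN | hN <;> rw [hN, smul_Amat, Amat_mem_piStableSet] <;>
    exact ⟨by ring, by ring, by ring⟩

theorem HasNormalForm.of_neg (h : HasNormalForm a (-b) (-c)) : HasNormalForm a b c := by
  obtain ⟨k, hk, r, hr, hN⟩ := h
  refine ⟨k * gen2, mul_mem hk gen2_mem_Sigma3, r, hr, ?_⟩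
  rwa [map_mul, mul_smul, toConjAct_gen2_smul_Amat]

theorem hasNormalForm_of_sqrt_three_mul_eq (ha : a ≠ 0) (h : √3 * b = -2 * a) :
    HasNormalForm a b 0 := by
  have hsqrt := Real.mul_self_sqrt (show (0 : ℝ) ≤ 3 by norm_num)
  refine ⟨gen1, gen1_mem_Sigma3, -a * √3 / 3, by simp [ha], Or.inr (Or.inl ?_)⟩
  rw [toConjAct_gen1_smul_Amat, smul_Amat]
  congr 1 <;> grind

theorem hasNormalForm_of_eq_sqrt_three_mul (ha : a ≠ 0) (h : c = √3 * a) :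
    HasNormalForm a c c := by
  have hsqrt := Real.mul_self_sqrt (show (0 : ℝ) ≤ 3 by norm_num)
  refine ⟨gen1, gen1_mem_Sigma3, -2 * a, by simpa using ha, Or.inl ?_⟩
  rw [toConjAct_gen1_smul_Amat, smul_Amat]
  congr 1 <;> grind

theorem hasNormalForm_of_isPiStable_of_c_eq_zero (h : a ≠ 0 ∨ b ≠ 0) (hs : IsPiStable a b 0) :
    HasNormalForm a b 0 := by
  have hsqrt := Real.mul_self_sqrt (show (0 : ℝ) ≤ 3 by norm_num)
  have hb : b * (4 * a ^ 2 - 3 * b ^ 2) = 0 := by linear_combination hs.2.2 / 2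
  rcases mul_eq_zero.1 hb with rfl | hab
  · have ha : a ≠ 0 := by simpa using h
    exact ⟨1, one_mem _, a, ha, Or.inl (by simp [smul_Amat])⟩
  have ha : a ≠ 0 := by
    rintro rfl
    have hb0 : b = 0 := by nlinarith
    simp [hb0] at h
  have hfac : (√3 * b + 2 * a) * (√3 * b - 2 * a) = 0 := by
    linear_combination (-1) * hab + b ^ 2 * hsqrt
  rcases mul_eq_zero.1 hfac with hb | hb
  · exact hasNormalForm_of_sqrt_three_mul_eq ha (by linarith)
  · apply HasNormalForm.of_neg
    rw [neg_zero]
    exact hasNormalForm_of_sqrt_three_mul_eq ha (by linarith)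

theorem hasNormalForm_of_isPiStable_of_c_ne_zero (hc : c ≠ 0) (hs : IsPiStable a b c) :
    HasNormalForm a b c := by
  have hsqrt := Real.mul_self_sqrt (show (0 : ℝ) ≤ 3 by norm_num)
  obtain ⟨h1, h2, -⟩ := hs
  rcases mul_eq_zero.1 h2 with hac | hbc
  · obtain rfl : a = 0 := (mul_eq_zero.1 hac).resolve_right hc
    have hfac : (c - 3 * b) * (c + b) = 0 := by
      linear_combination (mul_eq_zero.1 h1).resolve_left hc
    have hb : b ≠ 0 := by rintro rfl; simp_all
    refine ⟨1, one_mem _, b, hb, Or.inr ?_⟩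
    simp only [map_one, one_smul, smul_Amat]
    rcases mul_eq_zero.1 hfac with hc' | hc'
    · exact Or.inl (by congr 1 <;> linarith)
    · exact Or.inr (by congr 1 <;> linarith)
  · obtain rfl : b = c := by linarith
    have hb : b ^ 2 = 3 * a ^ 2 := by
      linear_combination (-1 / 4) * (mul_eq_zero.1 h1).resolve_left hc
    have ha : a ≠ 0 := by rintro rfl; exact hc (by simpa using hb)
    have hfac : (b - √3 * a) * (b + √3 * a) = 0 := by linear_combination hb - a ^ 2 * hsqrt
    rcases mul_eq_zero.1 hfac with hb | hb
    · exact hasNormalForm_of_eq_sqrt_three_mul ha (by linarith)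
    · exact HasNormalForm.of_neg (hasNormalForm_of_eq_sqrt_three_mul ha (by linarith))

theorem hasNormalForm_of_isPiStable (h : ¬(a = 0 ∧ b = 0 ∧ c = 0)) (hs : IsPiStable a b c) :
    HasNormalForm a b c := by
  rcases eq_or_ne c 0 with rfl | hc
  · exact hasNormalForm_of_isPiStable_of_c_eq_zero (by tauto) hs
  · exact hasNormalForm_of_isPiStable_of_c_ne_zero hc hs

end NormalForm

theorem stmt13 (a b c : ℝ) (h : ¬(a = 0 ∧ b = 0 ∧ c = 0)) :
    ((∀ l ∈ Pabc a b c, Xabc a b c l ∈ Pabc a b c) ↔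
      ∃ k ∈ Sigma3, ∃ r : ℝ, r ≠ 0 ∧
        ((k : Matrix (Fin 2) (Fin 2) ℝ) * Amat a b c * ((k⁻¹ : GL (Fin 2) ℝ) :
            Matrix (Fin 2) (Fin 2) ℝ) = r • Amat 1 0 0 ∨
          (k : Matrix (Fin 2) (Fin 2) ℝ) * Amat a b c * ((k⁻¹ : GL (Fin 2) ℝ) :
            Matrix (Fin 2) (Fin 2) ℝ) = r • Amat 0 1 3 ∨
          (k : Matrix (Fin 2) (Fin 2) ℝ) * Amat a b c * ((k⁻¹ : GL (Fin 2) ℝ) :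
            Matrix (Fin 2) (Fin 2) ℝ) = r • Amat 0 1 (-1))) ∧
    Pabc 1 0 0 = {l | l 1 = 0 ∧ l 3 = 0} ∧
    Pabc 0 1 3 = {l | 9 * l 0 = l 2 ∧ l 1 = l 3} ∧
    Pabc 0 1 (-1) = {l | l 0 = l 2 ∧ l 1 = l 3} := by
  refine ⟨(mapsTo_Xabc_iff h).trans <| cross_eq_zero_iff_isPiStable.trans
      ⟨hasNormalForm_of_isPiStable h, IsPiStable.of_hasNormalForm⟩, ?_, ?_, ?_⟩ <;>
    ext l <;> simp only [Pabc, Set.mem_ofPred_eq] <;>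
    constructor <;> rintro ⟨h₁, h₂⟩ <;> constructor <;> linarith
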